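/- arXiv:1307.3841 — 3 statements merged into one kernel-verified Lean document; each statement's English description precedes it below -/
import Mathlib

section
/- Let R = W(k) be the Witt vectors over an algebraically closed field k of characteristic p, and δ : R → R the standard p-derivation δ(x) = (φ(x) - x^p)/p where φ is the Frobenius automorphism. Then for b ∈ R, b = 0 if and only if δ^i(b) ≡ 0 mod p for all i ≥ 0. -/
/-!
If `p ∣ δ^i(b)` for all `i`, then `p^n ∣ b` for all `n`, by induction on `n` simultaneously for
all such `b`: writing `b = p c`, the defining identity gives `φ(c) = δ(b) + b^(p-1) c`, where both
summands are divisible by `p^n` by the induction hypothesis (applied to `δ b` and to `b`). Since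
`φ` is an automorphism fixing `p`, `p^n ∣ c`, i.e. `p^(n+1) ∣ b`. In `W(k)` an element divisible
by every power of `p` has all Witt coordinates zero.
-/

open WittVector

namespace PDerivation

variable {R : Type*} [CommRing R] {p : ℕ} {φ : R ≃+* R} {δ : R → R}

theorem map_zero (hδ : ∀ x, (p : R) * δ x = φ x - x ^ p) (hp : p ≠ 0)
    (hreg : IsLeftRegular (p : R)) : δ 0 = 0 :=
  hreg (by simp only [hδ, _root_.map_zero, zero_pow hp, sub_zero, mul_zero])

theorem apply_eq_natCast_mul (hδ : ∀ x, (p : R) * δ x = φ x - x ^ p) (hp : p ≠ 0)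
    (hreg : IsLeftRegular (p : R)) (c : R) :
    φ c = δ (p * c) + (p * c) ^ (p - 1) * c := by
  have hpow : ((p : R) * c) ^ (p - 1) * (p * c) = (p * c) ^ p := by
    rw [← pow_succ, Nat.sub_add_cancel (Nat.one_le_iff_ne_zero.2 hp)]
  refine hreg ?_
  simp only [mul_add, hδ, map_mul, map_natCast]
  linear_combination -hpow

theorem natCast_pow_dvd_of_forall_dvd_iterate (hδ : ∀ x, (p : R) * δ x = φ x - x ^ p)
    (hp : 1 < p) (hreg : IsLeftRegular (p : R)) {b : R} (h : ∀ i, (p : R) ∣ δ^[i] b) (n : ℕ) :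
    (p : R) ^ n ∣ b := by
  induction n generalizing b with
  | zero => simp
  | succ n ih =>
    obtain ⟨c, rfl⟩ : (p : R) ∣ b := h 0
    have hδb : (p : R) ^ n ∣ δ (p * c) :=
      ih fun i ↦ by simpa only [Function.iterate_succ_apply] using h (i + 1)
    have hb : (p : R) ^ n ∣ (p * c) ^ (p - 1) * c :=
      (ih h).trans (dvd_mul_of_dvd_left (dvd_pow_self _ (by omega)) c)
    have hφc : φ ((p : R) ^ n) ∣ φ c := by
      rw [map_pow, map_natCast, apply_eq_natCast_mul hδ (by omega) hreg]
      exact dvd_add hδb hb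
    rw [pow_succ']
    exact mul_dvd_mul_left _ ((map_dvd_iff φ).1 hφc)

end PDerivation

namespace WittVector

variable {p : ℕ} [Fact p.Prime] {k : Type*} [CommRing k] [CharP k p] [PerfectRing k p]

theorem isLeftRegular_natCast : IsLeftRegular (p : WittVector p k) :=
  isLeftRegular_iff_right_eq_zero_of_mul.2 fun x hx ↦
    eq_zero_of_p_mul_eq_zero x (by rwa [mul_comm])

theorem eq_zero_of_forall_p_pow_dvd {x : WittVector p k} (h : ∀ n, (p : WittVector p k) ^ n ∣ x) :
    x = 0 := by
  ext m
  rw [zero_coeff]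
  exact (mem_span_p_pow_iff_le_coeff_eq_zero x (m + 1)).1
    (Ideal.mem_span_singleton.2 (h _)) m m.lt_succ_self

end WittVector

/-- Let `R = W(k)` with `k` an algebraic closure of `ℤ/pℤ`, `φ` the Frobenius
automorphism and `δ(x) = (φ(x) - x^p)/p` the standard `p`-derivation. Then for
`b ∈ R`, `b = 0` if and only if `δ^i(b) ≡ 0 mod p` for all `i ≥ 0`. -/
theorem zero_iff_all_delta_iterates_zero_mod_p (p : ℕ) [Fact p.Prime]
    (δ : WittVector p (AlgebraicClosure (ZMod p)) →
         WittVector p (AlgebraicClosure (ZMod p)))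
    (hδ : ∀ x, (p : WittVector p (AlgebraicClosure (ZMod p))) * δ x =
      WittVector.frobenius x - x ^ p)
    (b : WittVector p (AlgebraicClosure (ZMod p))) :
    b = 0 ↔ ∀ i : ℕ, (p : WittVector p (AlgebraicClosure (ZMod p))) ∣ δ^[i] b := by
  have hp : p.Prime := Fact.out
  have hδφ : ∀ x, (p : WittVector p (AlgebraicClosure (ZMod p))) * δ x =
      frobeniusEquiv p _ x - x ^ p := hδ
  constructor
  · rintro rfl i
    rw [Function.iterate_fixed (PDerivation.map_zero hδφ hp.ne_zero isLeftRegular_natCast)]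
    exact dvd_zero _
  · exact fun h ↦ eq_zero_of_forall_p_pow_dvd
      (PDerivation.natCast_pow_dvd_of_forall_dvd_iterate hδφ hp.one_lt isLeftRegular_natCast h)
end

section
/- With the polynomials A_{m,i} as defined by the recursion (A_{0,i} = z^{(i)}; A_{m+1,0} = −(w^{(m)})^{p−1}A_{m,0}; A_{m+1,i} = φ(A_{m,i−1}) − (w^{(m)})^{p−1}A_{m,i}; A_{m+1,m+r+1} = φ(A_{m,m+r})), for all m ≥ 0 one has A_{m,m+r−1} ≡ φ^m(z^{(r−1)}) modulo the ideal generated by z^{(r)}, φ(z^{(r)}), …, φ^{m−1}(z^{(r)}). -/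
open MvPolynomial

/-!
Along the subdiagonal `i = m + r - 1` the recursion reads
`A_{m+1,m+r} = φ(A_{m,m+r-1}) - (w⁽ᵐ⁾)^{p-1} A_{m,m+r}`, and along the top diagonal it is
`A_{m+1,m+r+1} = φ(A_{m,m+r})`, so `A_{m,m+r} = φᵐ(z⁽ʳ⁾)`. Hence each step applies `φ` and
adds a multiple of `φᵐ(z⁽ʳ⁾)`; since `φ` maps the ideal `(z⁽ʳ⁾, …, φ^{m-1}(z⁽ʳ⁾))` into the
next one, induction on `m` gives the congruence.
-/

section IterateCongruence

variable {R : Type*} [CommRing R] (φ : R →+* R)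

theorem eq_iterate_of_succ_eq {α : Type*} (f : α → α) (b : ℕ → α)
    (hb : ∀ m, b (m + 1) = f (b m)) (m : ℕ) : b m = f^[m] (b 0) := by
  induction m with
  | zero => rfl
  | succ m ih => rw [hb, ih, Function.iterate_succ_apply']

theorem Ideal.map_span_iterate_image_Iio_le (x : R) (m : ℕ) :
    Ideal.map φ (Ideal.span ((fun j => (⇑φ)^[j] x) '' Set.Iio m)) ≤
      Ideal.span ((fun j => (⇑φ)^[j] x) '' Set.Iio (m + 1)) := by
  rw [Ideal.map_span]
  refine Ideal.span_mono ?_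
  rintro _ ⟨_, ⟨j, hj, rfl⟩, rfl⟩
  exact ⟨j + 1, Nat.succ_lt_succ hj, Function.iterate_succ_apply' _ _ _⟩

theorem sub_iterate_mem_span_iterate_image_Iio (a b : ℕ → R)
    (hb : ∀ m, b (m + 1) = φ (b m)) (ha : ∀ m, a (m + 1) - φ (a m) ∈ Ideal.span {b m})
    (m : ℕ) :
    a m - (⇑φ)^[m] (a 0) ∈ Ideal.span ((fun j => (⇑φ)^[j] (b 0)) '' Set.Iio m) := by
  induction m with
  | zero => simp
  | succ m ih =>
    have hstep : a (m + 1) - φ (a m) ∈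
        Ideal.span ((fun j => (⇑φ)^[j] (b 0)) '' Set.Iio (m + 1)) := by
      refine Ideal.span_le.mpr ?_ (ha m)
      rintro _ rfl
      exact Ideal.subset_span ⟨m, Nat.lt_succ_self m, (eq_iterate_of_succ_eq φ b hb m).symm⟩
    have hmap := Ideal.map_span_iterate_image_Iio_le φ (b 0) m (Ideal.mem_map_of_mem φ ih)
    rw [map_sub, ← Function.iterate_succ_apply' (⇑φ)] at hmap
    simpa using add_mem hstep hmap

end IterateCongruence

/-- With `A_{m,i}` as defined by the recursion, for all `m ≥ 0` one has
`A_{m,m+r−1} ≡ φᵐ(z⁽ʳ⁻¹⁾)` modulo the ideal generated by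
`z⁽ʳ⁾, φ(z⁽ʳ⁾), …, φ^{m−1}(z⁽ʳ⁾)`. -/
theorem A_m_subtop_congruence (p r : ℕ) (hr : 1 ≤ r)
    (φ : MvPolynomial (Fin (r + 1) × ℕ ⊕ ℕ) ℤ →+* MvPolynomial (Fin (r + 1) × ℕ ⊕ ℕ) ℤ)
    (A : ℕ → ℕ → MvPolynomial (Fin (r + 1) × ℕ ⊕ ℕ) ℤ)
    (hA0 : ∀ i : ℕ, ∀ h : i ≤ r, A 0 i = X (Sum.inl (⟨i, by omega⟩, 0)))
    (hArec : ∀ m i : ℕ, 1 ≤ i → i ≤ m + r →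
      A (m + 1) i = φ (A m (i - 1)) - (X (Sum.inr m)) ^ (p - 1) * A m i)
    (hArecTop : ∀ m : ℕ, A (m + 1) (m + r + 1) = φ (A m (m + r))) :
    ∀ m : ℕ, A m (m + r - 1) - (⇑φ)^[m] (X (Sum.inl (⟨r - 1, by omega⟩, 0))) ∈
      Ideal.span ((fun j : ℕ => (⇑φ)^[j] (X (Sum.inl (Fin.last r, 0)))) '' Set.Iio m) := by
  have hsub : ∀ m, A (m + 1) (m + 1 + r - 1) - φ (A m (m + r - 1)) ∈
      Ideal.span {A m (m + r)} := by
    intro m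
    rw [show m + 1 + r - 1 = m + r by omega, hArec m (m + r) (by omega) le_rfl,
      sub_sub_cancel_left]
    exact neg_mem (Ideal.mul_mem_left _ _ (Ideal.mem_span_singleton_self _))
  have htop : ∀ m, A (m + 1) (m + 1 + r) = φ (A m (m + r)) := fun m => by
    rw [Nat.add_right_comm, hArecTop]
  intro m
  have h := sub_iterate_mem_span_iterate_image_Iio φ (fun m => A m (m + r - 1))
    (fun m => A m (m + r)) htop hsub m
  simp only [Nat.zero_add] at h
  rwa [hA0 r le_rfl, hA0 (r - 1) (by omega)] at h
end

section
/- Let A be a commutative ring, M a free A-module with basis ω^{(0)}, …, ω^{(m+2)}, and let N ⊆ M be the submodule generated by the elements β_i := p ω^{(2+i)} − c_i ω^{(1+i)} + ω^{(i)} for i = 0, …, m, where c_i ∈ A and p ∈ A. Then the natural map from the free submodule spanned by ω^{(0)}, ω^{(1)} into M/N is injective, and the cokernel of this map is annihilated by p^{m+1}. -/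
/-!
The relation `βᵢ` has leading coefficient `p` in position `i + 2` and vanishes beyond it.
Injectivity: if `∑ aᵢ βᵢ` is supported on `{0, 1}`, then reading off coordinate `j + 2` with
`aᵢ = 0` for all `i > j` leaves `p aⱼ = 0`, so downward induction and regularity of `p` kill
every `aᵢ`. Cokernel: for `x` supported on the first `k + 2` coordinates, `p x − x_{k+2} β_k` is
supported on the first `k + 1`, so each further coordinate costs one factor of `p`.
-/

open Submodule

section

variable {A : Type*} [CommRing A] {m : ℕ}

theorem mem_span_single_zero_one_iff {x : Fin (m + 3) → A} :
    x ∈ span A {Pi.single 0 1, Pi.single 1 1} ↔ ∀ l : Fin (m + 3), 2 ≤ (l : ℕ) → x l = 0 := by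
  constructor
  · rintro hx l hl
    obtain ⟨r, s, rfl⟩ := mem_span_pair.1 hx
    have h0 : l ≠ 0 := fun h => by simp [h] at hl
    have h1 : l ≠ 1 := fun h => by simp [h] at hl
    simp [h0, h1]
  · intro hx
    refine mem_span_pair.2 ⟨x 0, x 1, funext fun l => ?_⟩
    by_cases h0 : l = 0
    · subst h0; simp
    by_cases h1 : l = 1
    · subst h1; simp
    have hl : 2 ≤ (l : ℕ) := by
      simp only [Fin.ext_iff, Fin.val_zero, Fin.val_one] at h0 h1
      omega
    simp [h0, h1, hx l hl]

structure IsShiftedTriangular (p : A) (β : Fin (m + 1) → Fin (m + 3) → A) : Prop where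
  apply_of_lt : ∀ (i : Fin (m + 1)) (l : Fin (m + 3)), (i : ℕ) + 2 < l → β i l = 0
  apply_diag : ∀ i : Fin (m + 1), β i ⟨i + 2, by omega⟩ = p

namespace IsShiftedTriangular

variable {p : A} {β : Fin (m + 1) → Fin (m + 3) → A}

theorem sum_smul_apply (hβ : IsShiftedTriangular p β) {a : Fin (m + 1) → A} (j : Fin (m + 1))
    (ha : ∀ i, j < i → a i = 0) : (∑ i, a i • β i) ⟨j + 2, by omega⟩ = p * a j := by
  rw [Finset.sum_apply, Finset.sum_eq_single j, Pi.smul_apply, hβ.apply_diag, smul_eq_mul, mul_comm]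
  · intro i _ hij
    rcases lt_or_gt_of_ne hij with hlt | hgt
    · rw [Pi.smul_apply, hβ.apply_of_lt i _ (by rw [Fin.lt_def] at hlt; simp only; omega), smul_zero]
    · rw [Pi.smul_apply, ha i hgt, zero_smul]
  · simp

theorem eq_zero_of_sum_smul_apply (hβ : IsShiftedTriangular p β) (hp : IsLeftRegular p)
    {a : Fin (m + 1) → A} (h : ∀ j : Fin (m + 1), (∑ i, a i • β i) ⟨j + 2, by omega⟩ = 0) :
    a = 0 := by
  funext j
  induction j using WellFoundedGT.induction with
  | _ j ih =>
    refine isLeftRegular_iff_right_eq_zero_of_mul.1 hp _ ?_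
    rw [← hβ.sum_smul_apply j ih, h]

theorem disjoint_span_pair_span (hβ : IsShiftedTriangular p β) (hp : IsLeftRegular p) :
    Disjoint (span A {Pi.single 0 1, Pi.single 1 1}) (span A (Set.range β)) := by
  refine disjoint_def.2 fun x hxP hxN => ?_
  obtain ⟨a, rfl⟩ := (mem_span_range_iff_exists_fun A).1 hxN
  have ha : a = 0 := hβ.eq_zero_of_sum_smul_apply hp fun j =>
    mem_span_single_zero_one_iff.1 hxP _ (by simp)
  simp [ha]

theorem pow_smul_mem_sup (hβ : IsShiftedTriangular p β) {k : ℕ} (hk : k ≤ m + 1)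
    {x : Fin (m + 3) → A} (hx : ∀ l : Fin (m + 3), k + 1 < (l : ℕ) → x l = 0) :
    p ^ k • x ∈ span A {Pi.single 0 1, Pi.single 1 1} ⊔ span A (Set.range β) := by
  induction k generalizing x with
  | zero =>
    rw [pow_zero, one_smul]
    exact mem_sup_left (mem_span_single_zero_one_iff.2 hx)
  | succ k ih =>
    set i : Fin (m + 1) := ⟨k, by omega⟩
    have hy : p ^ k • (p • x - x ⟨k + 2, by omega⟩ • β i) ∈
        span A {Pi.single 0 1, Pi.single 1 1} ⊔ span A (Set.range β) := by
      refine ih (by omega) fun l hl => ?_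
      rw [Pi.sub_apply, Pi.smul_apply, Pi.smul_apply, smul_eq_mul, smul_eq_mul]
      rcases (show (l : ℕ) = k + 2 ∨ k + 2 < l by omega) with hl | hl
      · rw [show l = ⟨i + 2, by omega⟩ from Fin.ext hl, hβ.apply_diag]
        exact sub_eq_zero.2 (mul_comm _ _)
      · rw [hx l (by omega), hβ.apply_of_lt i l hl, mul_zero, mul_zero, sub_zero]
    have hsplit : p ^ (k + 1) • x =
        p ^ k • (p • x - x ⟨k + 2, by omega⟩ • β i) + (p ^ k * x ⟨k + 2, by omega⟩) • β i := by
      rw [smul_sub, smul_smul, smul_smul, ← pow_succ, sub_add_cancel]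
    rw [hsplit]
    exact add_mem hy (mem_sup_right (smul_mem _ _ (subset_span ⟨i, rfl⟩)))

end IsShiftedTriangular

def threeTermRelation (p : A) (c : Fin (m + 1) → A) (i : Fin (m + 1)) : Fin (m + 3) → A :=
  p • Pi.single ⟨i + 2, by omega⟩ 1 - c i • Pi.single ⟨i + 1, by omega⟩ 1 +
    Pi.single ⟨i, by omega⟩ 1

theorem isShiftedTriangular_threeTermRelation (p : A) (c : Fin (m + 1) → A) :
    IsShiftedTriangular p (threeTermRelation p c) where
  apply_of_lt i l hl := by
    have h2 : l ≠ ⟨i + 2, by omega⟩ := fun h => by simp [h] at hl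
    have h1 : l ≠ ⟨i + 1, by omega⟩ := fun h => by simp [h] at hl
    have h0 : l ≠ ⟨i, by omega⟩ := fun h => by simp [h] at hl
    simp [threeTermRelation, h0, h1, h2]
  apply_diag i := by simp [threeTermRelation, Fin.ext_iff]

end

/-- Let `M` be a free `A`-module with basis `ω⁽⁰⁾,…,ω⁽ᵐ⁺²⁾` and `N ⊆ M` the submodule
generated by `βᵢ = p ω⁽²⁺ⁱ⁾ − cᵢ ω⁽¹⁺ⁱ⁾ + ω⁽ⁱ⁾`, `i = 0,…,m`.  Then the natural map
from the span of `ω⁽⁰⁾, ω⁽¹⁾` into `M/N` is injective, and its cokernel is annihilated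
by `p^{m+1}`. -/
theorem span_first_two_injective_and_cokernel_annihilated
    (A : Type*) [CommRing A] (p : ℕ)
    (hreg : ∀ a : A, (p : A) * a = 0 → a = 0)
    (m : ℕ) (c : Fin (m + 1) → A) :
    let e : Fin (m + 3) → (Fin (m + 3) → A) := fun i => Pi.single i 1
    let N : Submodule A (Fin (m + 3) → A) :=
      Submodule.span A (Set.range fun i : Fin (m + 1) =>
        (p : A) • e ⟨(i : ℕ) + 2, by have := i.isLt; omega⟩ -
          c i • e ⟨(i : ℕ) + 1, by have := i.isLt; omega⟩ +
          e ⟨(i : ℕ), by have := i.isLt; omega⟩)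
    let P : Submodule A (Fin (m + 3) → A) := Submodule.span A {e 0, e 1}
    (∀ x ∈ P, x ∈ N → x = 0) ∧
    (∀ x : Fin (m + 3) → A, ∃ y ∈ P, (p : A) ^ (m + 1) • x - y ∈ N) := by
  intro e N P
  have hβ := isShiftedTriangular_threeTermRelation (p : A) c
  refine ⟨disjoint_def.1 (hβ.disjoint_span_pair_span
    (isLeftRegular_iff_right_eq_zero_of_mul.2 hreg)), fun x => ?_⟩
  obtain ⟨y, hyP, z, hzN, hyz⟩ :=
    mem_sup.1 (hβ.pow_smul_mem_sup le_rfl (x := x) fun l hl => by omega)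
  exact ⟨y, hyP, by rwa [← hyz, add_sub_cancel_left]⟩
end
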